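/- Let T ≥ 2 be an integer, i₀ > 0 a real number, and i : ℝ → ℝ a function that is nonnegative and monotonically nondecreasing on [0,∞). If x* ∈ ℝ^{T-1} is a minimizer of the cost C over the set of feasible vectors, then its entries are ordered: x*_1 ≥ x*_2 ≥ ⋯ ≥ x*_{T-1} ≥ 0. -/

import Mathlib

/-- Partial information `D_t(x) = i₀ + ∑_{s=1}^{t} i(x_s)`. -/
noncomputable def Dinfo (i0 : ℝ) (i : ℝ → ℝ) (x : ℕ → ℝ) (t : ℕ) : ℝ :=
  i0 + ∑ s ∈ Finset.Icc 1 t, i (x s)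

/-- Cost `C(x) = ∑_{t=1}^{T-1} 1/D_t(x) + ∑_{t=1}^{T-1} x_t`. -/
noncomputable def cost (T : ℕ) (i0 : ℝ) (i : ℝ → ℝ) (x : ℕ → ℝ) : ℝ :=
  (∑ t ∈ Finset.Icc 1 (T - 1), 1 / Dinfo i0 i x t) + ∑ t ∈ Finset.Icc 1 (T - 1), x t

/-- Feasibility: `x_k ≥ 0` for `k = 1, …, T-1`. -/
def Feasible (T : ℕ) (x : ℕ → ℝ) : Prop :=
  ∀ k, 1 ≤ k → k ≤ T - 1 → 0 ≤ x k

/-!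
Suppose `x k < x (k+1)` at a minimizer. If `i (x k) < i (x (k+1))`, swapping the two entries
leaves `∑ x_t` and every `D_t` with `t ≠ k` unchanged but strictly increases `D_k`, so the cost
drops. If `i (x k) = i (x (k+1))`, lowering `x (k+1)` to `x k` leaves every `D_t` unchanged and
strictly decreases `∑ x_t`. Either way the minimality of `x` is contradicted.
-/

open Finset

section Swap

variable {i0 : ℝ} {i : ℝ → ℝ} {x : ℕ → ℝ} {k : ℕ}

lemma sum_Icc_comp_swap {M : Type*} [AddCommMonoid M] (f : ℕ → M) {n : ℕ} (hk : 1 ≤ k)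
    (hkn : k + 1 ≤ n) :
    ∑ s ∈ Icc 1 n, f (Equiv.swap k (k + 1) s) = ∑ s ∈ Icc 1 n, f s :=
  Equiv.Perm.sum_comp _ _ _ fun s hs => by
    rw [Set.mem_ofPred_eq, Equiv.swap_apply_ne_self_iff] at hs
    rw [coe_Icc, Set.mem_Icc]
    omega

lemma Dinfo_comp_swap_of_lt {t : ℕ} (htk : t < k) :
    Dinfo i0 i (x ∘ Equiv.swap k (k + 1)) t = Dinfo i0 i x t := by
  refine congrArg (i0 + ·) (sum_congr rfl fun s hs => ?_)
  rw [mem_Icc] at hs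
  rw [Function.comp_apply, Equiv.swap_apply_of_ne_of_ne (by omega) (by omega)]

lemma Dinfo_comp_swap_of_gt (hk : 1 ≤ k) {t : ℕ} (hkt : k < t) :
    Dinfo i0 i (x ∘ Equiv.swap k (k + 1)) t = Dinfo i0 i x t :=
  congrArg (i0 + ·) (sum_Icc_comp_swap (i ∘ x) hk hkt)

lemma Dinfo_succ (t : ℕ) : Dinfo i0 i x (t + 1) = Dinfo i0 i x t + i (x (t + 1)) := by
  rw [Dinfo, Dinfo, sum_Icc_succ_top (Nat.le_add_left 1 t), add_assoc]

lemma Dinfo_comp_swap_self (hk : 1 ≤ k) :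
    Dinfo i0 i (x ∘ Equiv.swap k (k + 1)) k = Dinfo i0 i x k - i (x k) + i (x (k + 1)) := by
  obtain ⟨m, rfl⟩ := Nat.exists_eq_add_of_le' hk
  rw [Dinfo_succ, Dinfo_succ, Dinfo_comp_swap_of_lt (Nat.lt_succ_self m), Function.comp_apply,
    Equiv.swap_apply_left]
  ring

end Swap

lemma Dinfo_pos {T : ℕ} {i0 : ℝ} (hi0 : 0 < i0) {i : ℝ → ℝ}
    (hnonneg : ∀ y, 0 ≤ y → 0 ≤ i y) {x : ℕ → ℝ} (hx : Feasible T x) {t : ℕ}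
    (ht : t ≤ T - 1) : 0 < Dinfo i0 i x t :=
  add_pos_of_pos_of_nonneg hi0 <| sum_nonneg fun s hs => by
    rw [mem_Icc] at hs
    exact hnonneg _ (hx s hs.1 (hs.2.trans ht))

lemma Dinfo_congr {i0 : ℝ} {i : ℝ → ℝ} {x y : ℕ → ℝ} (h : i ∘ y = i ∘ x) :
    Dinfo i0 i y = Dinfo i0 i x :=
  funext fun _ => congrArg (i0 + ·) (sum_congr rfl fun s _ => congrFun h s)

namespace Feasible

variable {T : ℕ} {x : ℕ → ℝ}

lemma comp_swap (hx : Feasible T x) {k : ℕ} (hk : 1 ≤ k) (hkT : k + 1 ≤ T - 1) :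
    Feasible T (x ∘ Equiv.swap k (k + 1)) := fun s hs hsT => by
  rw [Function.comp_apply, Equiv.swap_apply_def]
  split_ifs <;> exact hx _ (by omega) (by omega)

lemma update (hx : Feasible T x) (j : ℕ) {a : ℝ} (ha : 0 ≤ a) :
    Feasible T (Function.update x j a) := fun s hs hsT => by
  rw [Function.update_apply]
  split_ifs
  exacts [ha, hx s hs hsT]

end Feasible

lemma cost_comp_swap_lt {T : ℕ} {i0 : ℝ} (hi0 : 0 < i0) {i : ℝ → ℝ}
    (hnonneg : ∀ y, 0 ≤ y → 0 ≤ i y) {x : ℕ → ℝ} (hx : Feasible T x) {k : ℕ} (hk : 1 ≤ k)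
    (hkT : k + 1 ≤ T - 1) (hi : i (x k) < i (x (k + 1))) :
    cost T i0 i (x ∘ Equiv.swap k (k + 1)) < cost T i0 i x := by
  have hD : ∀ t ∈ Icc 1 (T - 1), Dinfo i0 i x t ≤ Dinfo i0 i (x ∘ Equiv.swap k (k + 1)) t := by
    intro t _
    rcases lt_trichotomy t k with htk | rfl | hkt
    · rw [Dinfo_comp_swap_of_lt htk]
    · rw [Dinfo_comp_swap_self hk]; linarith
    · rw [Dinfo_comp_swap_of_gt hk hkt]
  have hDk : Dinfo i0 i x k < Dinfo i0 i (x ∘ Equiv.swap k (k + 1)) k := by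
    rw [Dinfo_comp_swap_self hk]; linarith
  have hinv : ∑ t ∈ Icc 1 (T - 1), 1 / Dinfo i0 i (x ∘ Equiv.swap k (k + 1)) t <
      ∑ t ∈ Icc 1 (T - 1), 1 / Dinfo i0 i x t := by
    refine sum_lt_sum (fun t ht => ?_) ⟨k, mem_Icc.2 ⟨hk, by omega⟩, ?_⟩
    · exact one_div_le_one_div_of_le
        (Dinfo_pos hi0 hnonneg hx (mem_Icc.1 ht).2) (hD t ht)
    · exact one_div_lt_one_div_of_lt (Dinfo_pos hi0 hnonneg hx (by omega)) hDk
  rw [cost, cost]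
  exact add_lt_add_of_lt_of_le hinv (sum_Icc_comp_swap x hk hkT).le

lemma cost_update_lt {T : ℕ} {i0 : ℝ} {i : ℝ → ℝ} {x : ℕ → ℝ} {j : ℕ} (hj : 1 ≤ j)
    (hjT : j ≤ T - 1) {a : ℝ} (ha : a < x j) (hi : i a = i (x j)) :
    cost T i0 i (Function.update x j a) < cost T i0 i x := by
  have hD : Dinfo i0 i (Function.update x j a) = Dinfo i0 i x :=
    Dinfo_congr (by rw [Function.comp_update, Function.update_eq_self_iff, hi]; rfl)
  have hsum : ∑ t ∈ Icc 1 (T - 1), Function.update x j a t < ∑ t ∈ Icc 1 (T - 1), x t := by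
    refine sum_lt_sum (fun t _ => ?_) ⟨j, mem_Icc.2 ⟨hj, hjT⟩, by simpa using ha⟩
    rw [Function.update_apply]
    split_ifs with h
    exacts [h ▸ ha.le, le_rfl]
  rw [cost, cost, hD]
  exact add_lt_add_right hsum _

theorem minimizer_entries_ordered_general (T : ℕ) (i0 : ℝ) (hi0 : 0 < i0) (i : ℝ → ℝ)
    (hnonneg : ∀ y, 0 ≤ y → 0 ≤ i y)
    (hmono : ∀ a b, 0 ≤ a → a ≤ b → i a ≤ i b)
    (xs : ℕ → ℝ) (hfeas : Feasible T xs)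
    (hmin : ∀ x, Feasible T x → cost T i0 i xs ≤ cost T i0 i x) :
    (∀ k, 1 ≤ k → k + 1 ≤ T - 1 → xs (k + 1) ≤ xs k) ∧
      (∀ k, 1 ≤ k → k ≤ T - 1 → 0 ≤ xs k) := by
  refine ⟨fun k hk hkT => ?_, hfeas⟩
  by_contra! hlt
  have hxk : 0 ≤ xs k := hfeas k hk (by omega)
  rcases (hmono _ _ hxk hlt.le).lt_or_eq with hi | hi
  · exact (hmin _ (hfeas.comp_swap hk hkT)).not_gt
      (cost_comp_swap_lt hi0 hnonneg hfeas hk hkT hi)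
  · exact (hmin _ (hfeas.update (k + 1) hxk)).not_gt
      (cost_update_lt (by omega) hkT hlt hi)

theorem minimizer_entries_ordered (T : ℕ) (hT : 2 ≤ T) (i0 : ℝ) (hi0 : 0 < i0) (i : ℝ → ℝ)
    (hnonneg : ∀ y, 0 ≤ y → 0 ≤ i y)
    (hmono : ∀ a b, 0 ≤ a → a ≤ b → i a ≤ i b)
    (xs : ℕ → ℝ) (hfeas : Feasible T xs)
    (hmin : ∀ x, Feasible T x → cost T i0 i xs ≤ cost T i0 i x) :
    (∀ k, 1 ≤ k → k + 1 ≤ T - 1 → xs (k + 1) ≤ xs k) ∧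
      (∀ k, 1 ≤ k → k ≤ T - 1 → 0 ≤ xs k) :=
  minimizer_entries_ordered_general T i0 hi0 i hnonneg hmono xs hfeas hmin
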